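/- (Corollary 1) In the covariance-steering setup with the constrained range-control problem data, suppose ξ* = (ξ*_1,…,ξ*_{N_x}, η*_0,…,η*_{N−1}) has nonnegative entries, K* is a feasible gain sequence satisfying complementary slackness with ξ*, K* minimizes K ↦ L(K, ξ*) over all gain sequences, and 𝓡_k + η*_k > 0 for every k. Set Q* = a aᵀ + Σ_i ξ*_i d_i d_iᵀ and R*_k = 𝓡_k + η*_k, and let (K̂_k) be the gain sequence produced by the backward Riccati recursion S_N = Q*, c_k = R*_k + B_kᵀ S_{k+1} B_k, K̂_k = −c_k⁻¹ B_kᵀ S_{k+1} A_k, S_k = A_kᵀ S_{k+1} A_k − c_k K̂_kᵀ K̂_k. Then J_LQ(K*; Q*, R*) = J_LQ(K̂; Q*, R*) = tr(S_0 P_0) + Σ_{k=0}^{N−1} tr(S_{k+1} G_k G_kᵀ); that is, the constrained-optimal gain K* attains the same LQ cost as the Riccati gains for the weights (Q*, R*), so the constrained problem can be solved by optimizing over the LQ weights with gains given by the Riccati recursion. -/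

import Mathlib

/-!
The Lagrangian is the LQ cost with weights `Q* = a aᵀ + Σ ξ*_i d_i d_iᵀ`, `R* = 𝓡 + η*` minus a
constant, so `K*` minimises that LQ cost. Completing the square in `K_k` at every step of the
Riccati recursion gives, for every gain sequence,
`J_LQ(K) = tr(S_0 P_0) + Σ_k tr(S_{k+1} G_k G_kᵀ) + Σ_k c_k (K_k - K̂_k) P_k (K_k - K̂_k)ᵀ`,
and `Q* ⪰ 0`, `R* > 0` keep every `S_k ⪰ 0`, hence every `c_k > 0`. So `K̂` attains the Riccati
value and is LQ-optimal, and `K*` attains it as well.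
-/

open Matrix Finset

noncomputable section

/-- Closed-loop covariance recursion `P_{k+1} = (A_k + B_k K_k) P_k (A_k + B_k K_k)ᵀ + G_k G_kᵀ`. -/
def Pseq {n m : ℕ} (A : ℕ → Matrix (Fin n) (Fin n) ℝ) (B : ℕ → Matrix (Fin n) (Fin 1) ℝ)
    (G : ℕ → Matrix (Fin n) (Fin m) ℝ) (P0 : Matrix (Fin n) (Fin n) ℝ)
    (K : ℕ → Matrix (Fin 1) (Fin n) ℝ) : ℕ → Matrix (Fin n) (Fin n) ℝ
  | 0 => P0
  | k + 1 => (A k + B k * K k) * Pseq A B G P0 K k * (A k + B k * K k)ᵀ + G k * (G k)ᵀ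

/-- The scalar closed-loop control variance `K_k P_k K_kᵀ`. -/
def ctrlVar {n m : ℕ} (A : ℕ → Matrix (Fin n) (Fin n) ℝ) (B : ℕ → Matrix (Fin n) (Fin 1) ℝ)
    (G : ℕ → Matrix (Fin n) (Fin m) ℝ) (P0 : Matrix (Fin n) (Fin n) ℝ)
    (K : ℕ → Matrix (Fin 1) (Fin n) ℝ) (k : ℕ) : ℝ :=
  (K k * Pseq A B G P0 K k * (K k)ᵀ) 0 0

/-- LQ cost `J_LQ(K; Q, R) = tr(Q P_N) + Σ_{k<N} R_k · (K_k P_k K_kᵀ)`. -/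
def JLQ {n m : ℕ} (N : ℕ) (A : ℕ → Matrix (Fin n) (Fin n) ℝ) (B : ℕ → Matrix (Fin n) (Fin 1) ℝ)
    (G : ℕ → Matrix (Fin n) (Fin m) ℝ) (P0 : Matrix (Fin n) (Fin n) ℝ)
    (Q : Matrix (Fin n) (Fin n) ℝ) (R : ℕ → ℝ) (K : ℕ → Matrix (Fin 1) (Fin n) ℝ) : ℝ :=
  (Q * Pseq A B G P0 K N).trace + ∑ k ∈ range N, R k * ctrlVar A B G P0 K k

/-- Range-control cost `J(K) = aᵀ P_N a + Σ_{k<N} 𝓡_k · (K_k P_k K_kᵀ)`. -/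
def Jcost {n m : ℕ} (N : ℕ) (A : ℕ → Matrix (Fin n) (Fin n) ℝ) (B : ℕ → Matrix (Fin n) (Fin 1) ℝ)
    (G : ℕ → Matrix (Fin n) (Fin m) ℝ) (P0 : Matrix (Fin n) (Fin n) ℝ)
    (a : Fin n → ℝ) (𝓡 : ℕ → ℝ) (K : ℕ → Matrix (Fin 1) (Fin n) ℝ) : ℝ :=
  a ⬝ᵥ (Pseq A B G P0 K N).mulVec a + ∑ k ∈ range N, 𝓡 k * ctrlVar A B G P0 K k

/-- Lagrangian of the constrained range-control problem, with state multipliers `ξ` and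
control multipliers `η`. -/
def Lagr {n m : ℕ} (N Nx : ℕ) (A : ℕ → Matrix (Fin n) (Fin n) ℝ)
    (B : ℕ → Matrix (Fin n) (Fin 1) ℝ) (G : ℕ → Matrix (Fin n) (Fin m) ℝ)
    (P0 : Matrix (Fin n) (Fin n) ℝ) (a : Fin n → ℝ) (𝓡 : ℕ → ℝ)
    (d : ℕ → Fin n → ℝ) (𝒟 𝒰 : ℕ → ℝ)
    (K : ℕ → Matrix (Fin 1) (Fin n) ℝ) (ξ η : ℕ → ℝ) : ℝ :=
  Jcost N A B G P0 a 𝓡 K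
    + ∑ i ∈ range Nx, ξ i * (d i ⬝ᵥ (Pseq A B G P0 K N).mulVec (d i) - 𝒟 i ^ 2)
    + ∑ k ∈ range N, η k * (ctrlVar A B G P0 K k - 𝒰 k ^ 2)


/-- Feasibility for the constrained range-control problem. -/
def Feasible {n m : ℕ} (N Nx : ℕ) (A : ℕ → Matrix (Fin n) (Fin n) ℝ)
    (B : ℕ → Matrix (Fin n) (Fin 1) ℝ) (G : ℕ → Matrix (Fin n) (Fin m) ℝ)
    (P0 : Matrix (Fin n) (Fin n) ℝ) (d : ℕ → Fin n → ℝ) (𝒟 𝒰 : ℕ → ℝ)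
    (K : ℕ → Matrix (Fin 1) (Fin n) ℝ) : Prop :=
  (∀ i < Nx, d i ⬝ᵥ (Pseq A B G P0 K N).mulVec (d i) ≤ 𝒟 i ^ 2) ∧
  (∀ k < N, ctrlVar A B G P0 K k ≤ 𝒰 k ^ 2)

/-- Backward Riccati recursion, indexed by the number `j` of steps taken backward from the final
index `N` (so `Srev j` is `S_{N-j}`): `S_N = Q` and, for `k = N-1,…,0`,
`c_k = R_k + B_kᵀ S_{k+1} B_k`, `K̂_k = −c_k⁻¹ B_kᵀ S_{k+1} A_k`,
`S_k = A_kᵀ S_{k+1} A_k − c_k K̂_kᵀ K̂_k`. -/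
def Srev {n : ℕ} (A : ℕ → Matrix (Fin n) (Fin n) ℝ) (B : ℕ → Matrix (Fin n) (Fin 1) ℝ)
    (Q : Matrix (Fin n) (Fin n) ℝ) (R : ℕ → ℝ) (N : ℕ) : ℕ → Matrix (Fin n) (Fin n) ℝ
  | 0 => Q
  | j + 1 =>
      let k := N - (j + 1)
      let S := Srev A B Q R N j
      let c := R k + ((B k)ᵀ * S * B k) 0 0
      let Kh := (-c⁻¹) • ((B k)ᵀ * S * A k)
      (A k)ᵀ * S * A k - c • (Khᵀ * Kh)

/-- The Riccati iterate `S_k`, for `0 ≤ k ≤ N`. -/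
def Smat {n : ℕ} (A : ℕ → Matrix (Fin n) (Fin n) ℝ) (B : ℕ → Matrix (Fin n) (Fin 1) ℝ)
    (Q : Matrix (Fin n) (Fin n) ℝ) (R : ℕ → ℝ) (N k : ℕ) : Matrix (Fin n) (Fin n) ℝ :=
  Srev A B Q R N (N - k)

/-- The scalar `c_k = R_k + B_kᵀ S_{k+1} B_k`. -/
def cval {n : ℕ} (A : ℕ → Matrix (Fin n) (Fin n) ℝ) (B : ℕ → Matrix (Fin n) (Fin 1) ℝ)
    (Q : Matrix (Fin n) (Fin n) ℝ) (R : ℕ → ℝ) (N k : ℕ) : ℝ :=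
  R k + ((B k)ᵀ * Smat A B Q R N (k + 1) * B k) 0 0

/-- The optimal LQ (Riccati) gain `K̂_k = −c_k⁻¹ B_kᵀ S_{k+1} A_k`. -/
def Khat {n : ℕ} (A : ℕ → Matrix (Fin n) (Fin n) ℝ) (B : ℕ → Matrix (Fin n) (Fin 1) ℝ)
    (Q : Matrix (Fin n) (Fin n) ℝ) (R : ℕ → ℝ) (N k : ℕ) : Matrix (Fin 1) (Fin n) ℝ :=
  (-(cval A B Q R N k)⁻¹) • ((B k)ᵀ * Smat A B Q R N (k + 1) * A k)

namespace Matrix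

variable {ι κ : Type*}

lemma PosSemidef.transpose_mul_mul_same [Fintype ι] [Fintype κ] {S : Matrix ι ι ℝ}
    (hS : S.PosSemidef) (M : Matrix ι κ ℝ) : (Mᵀ * S * M).PosSemidef := by
  simpa [conjTranspose_eq_transpose_of_trivial] using hS.conjTranspose_mul_mul_same M

lemma PosSemidef.mul_mul_transpose_same [Fintype ι] [Fintype κ] {S : Matrix ι ι ℝ}
    (hS : S.PosSemidef) (M : Matrix κ ι ℝ) : (M * S * Mᵀ).PosSemidef := by
  simpa [conjTranspose_eq_transpose_of_trivial] using hS.mul_mul_conjTranspose_same M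

lemma PosSemidef.transpose_eq {S : Matrix ι ι ℝ} (hS : S.PosSemidef) : Sᵀ = S := by
  simpa [conjTranspose_eq_transpose_of_trivial] using hS.isHermitian.eq

lemma posSemidef_vecMulVec_self [Fintype ι] (a : ι → ℝ) : (vecMulVec a a).PosSemidef := by
  simpa using posSemidef_vecMulVec_self_star a

lemma trace_vecMulVec_self_mul [Fintype ι] (a : ι → ℝ) (P : Matrix ι ι ℝ) :
    (vecMulVec a a * P).trace = a ⬝ᵥ P *ᵥ a := by
  rw [vecMulVec_mul, trace_vecMulVec, dotProduct_comm, dotProduct_mulVec]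

lemma transpose_mul_mul_of_fin_one (K : Matrix (Fin 1) κ ℝ) (X : Matrix (Fin 1) (Fin 1) ℝ) :
    Kᵀ * X * K = X 0 0 • (Kᵀ * K) := by
  have hX : X = X 0 0 • (1 : Matrix (Fin 1) (Fin 1) ℝ) := by
    ext i j
    simp [Subsingleton.elim i 0, Subsingleton.elim j 0]
  rw [hX, Matrix.mul_smul, Matrix.mul_one, Matrix.smul_mul]
  simp

lemma trace_transpose_mul_self_mul [Fintype κ] (X : Matrix (Fin 1) κ ℝ) (P : Matrix κ κ ℝ) :
    (Xᵀ * X * P).trace = (X * P * Xᵀ) 0 0 := by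
  rw [Matrix.mul_assoc, trace_mul_comm, trace_fin_one]

lemma closedLoop_quadForm_completeSquare [Fintype ι] (S A : Matrix ι ι ℝ)
    (B : Matrix ι (Fin 1) ℝ) (K L : Matrix (Fin 1) ι ℝ) (r c : ℝ) (hS : Sᵀ = S)
    (hc : c = r + (Bᵀ * S * B) 0 0) (hL : c • L = -(Bᵀ * S * A)) :
    (A + B * K)ᵀ * S * (A + B * K) + r • (Kᵀ * K)
      = (Aᵀ * S * A - c • (Lᵀ * L)) + c • ((K - L)ᵀ * (K - L)) := by
  have hLt : c • Lᵀ = -(Aᵀ * S * B) := by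
    rw [← transpose_smul, hL, transpose_neg, transpose_mul, transpose_mul, hS,
      transpose_transpose, Matrix.mul_assoc]
  have hquad : Kᵀ * (Bᵀ * S * B) * K = (c - r) • (Kᵀ * K) := by
    rw [transpose_mul_mul_of_fin_one, hc, add_sub_cancel_left]
  have hcross₁ : Aᵀ * S * B * K = -((c • Lᵀ) * K) := by
    rw [hLt, Matrix.neg_mul, neg_neg]
  have hcross₂ : Kᵀ * (Bᵀ * S * A) = -(Kᵀ * (c • L)) := by
    rw [hL, Matrix.mul_neg, neg_neg]
  calc (A + B * K)ᵀ * S * (A + B * K) + r • (Kᵀ * K)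
      = Aᵀ * S * A + Aᵀ * S * B * K + Kᵀ * (Bᵀ * S * A) + Kᵀ * (Bᵀ * S * B) * K
          + r • (Kᵀ * K) := by
        simp only [transpose_add, transpose_mul, Matrix.add_mul, Matrix.mul_add,
          Matrix.mul_assoc]
        abel
    _ = (Aᵀ * S * A - c • (Lᵀ * L)) + c • ((K - L)ᵀ * (K - L)) := by
        rw [hquad, hcross₁, hcross₂]
        simp only [transpose_sub, Matrix.sub_mul, Matrix.mul_sub, Matrix.smul_mul,
          Matrix.mul_smul, sub_smul, smul_sub]
        abel

lemma trace_mul_closedLoop_add [Fintype ι] (S A P W : Matrix ι ι ℝ) (B : Matrix ι (Fin 1) ℝ)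
    (K L : Matrix (Fin 1) ι ℝ) (r c : ℝ) (hS : Sᵀ = S) (hc : c = r + (Bᵀ * S * B) 0 0)
    (hL : c • L = -(Bᵀ * S * A)) :
    (S * ((A + B * K) * P * (A + B * K)ᵀ + W)).trace + r * (K * P * Kᵀ) 0 0
      = ((Aᵀ * S * A - c • (Lᵀ * L)) * P).trace + (S * W).trace
        + c * ((K - L) * P * (K - L)ᵀ) 0 0 := by
  have hconj : (S * ((A + B * K) * P * (A + B * K)ᵀ)).trace
      = ((A + B * K)ᵀ * S * (A + B * K) * P).trace := by
    rw [← Matrix.mul_assoc, trace_mul_comm, ← Matrix.mul_assoc, ← Matrix.mul_assoc]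
  have hsmul (x : ℝ) (X : Matrix (Fin 1) ι ℝ) :
      x * (X * P * Xᵀ) 0 0 = ((x • (Xᵀ * X)) * P).trace := by
    rw [Matrix.smul_mul, trace_smul, trace_transpose_mul_self_mul, smul_eq_mul]
  rw [Matrix.mul_add, trace_add, hconj, hsmul, hsmul, add_right_comm, ← trace_add,
    ← Matrix.add_mul, closedLoop_quadForm_completeSquare S A B K L r c hS hc hL, Matrix.add_mul,
    trace_add]
  ring

end Matrix

section Riccati

variable {n : ℕ} (A : ℕ → Matrix (Fin n) (Fin n) ℝ) (B : ℕ → Matrix (Fin n) (Fin 1) ℝ)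
  (Q : Matrix (Fin n) (Fin n) ℝ) (R : ℕ → ℝ) (N : ℕ)

lemma Smat_self : Smat A B Q R N N = Q := by
  simp [Smat, Srev]

lemma Smat_of_lt {k : ℕ} (hk : k < N) :
    Smat A B Q R N k = (A k)ᵀ * Smat A B Q R N (k + 1) * A k
      - cval A B Q R N k • ((Khat A B Q R N k)ᵀ * Khat A B Q R N k) := by
  have h₁ : N - k = N - (k + 1) + 1 := by omega
  have h₂ : N - (N - (k + 1) + 1) = k := by omega
  rw [Smat, h₁, Srev, h₂]
  rfl

lemma cval_smul_Khat {k : ℕ} (hc : cval A B Q R N k ≠ 0) :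
    cval A B Q R N k • Khat A B Q R N k = -((B k)ᵀ * Smat A B Q R N (k + 1) * A k) := by
  rw [Khat, smul_smul, mul_neg, mul_inv_cancel₀ hc, neg_smul, one_smul]

lemma cval_pos {k : ℕ} (hS : (Smat A B Q R N (k + 1)).PosSemidef) (hR : 0 < R k) :
    0 < cval A B Q R N k :=
  add_pos_of_pos_of_nonneg hR (hS.transpose_mul_mul_same (B k)).diag_nonneg

variable {Q R N}

lemma Smat_posSemidef (hQ : Q.PosSemidef) (hR : ∀ k < N, 0 < R k) {k : ℕ} (hk : k ≤ N) :
    (Smat A B Q R N k).PosSemidef := by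
  refine Nat.decreasingInduction (motive := fun k _ => (Smat A B Q R N k).PosSemidef)
    (fun k hk hS => ?_) (by rw [Smat_self]; exact hQ) hk
  have hc := cval_pos A B Q R N hS (hR k hk)
  -- at `K = K̂` the completed square is the Joseph form of `S_k`, visibly positive semidefinite
  have hJoseph := Matrix.closedLoop_quadForm_completeSquare (Smat A B Q R N (k + 1)) (A k)
    (B k) (Khat A B Q R N k) (Khat A B Q R N k) (R k) (cval A B Q R N k) hS.transpose_eq rfl
    (cval_smul_Khat A B Q R N hc.ne')
  rw [sub_self, transpose_zero, Matrix.zero_mul, smul_zero, add_zero, ← Smat_of_lt A B Q R N hk]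
    at hJoseph
  rw [← hJoseph]
  exact (hS.transpose_mul_mul_same _).add
    ((posSemidef_conjTranspose_mul_self _).smul (hR k hk).le)

end Riccati

section Cost

variable {n m : ℕ} (A : ℕ → Matrix (Fin n) (Fin n) ℝ) (B : ℕ → Matrix (Fin n) (Fin 1) ℝ)
  (G : ℕ → Matrix (Fin n) (Fin m) ℝ) (P0 : Matrix (Fin n) (Fin n) ℝ)

lemma Pseq_posSemidef (hP0 : P0.PosSemidef) (K : ℕ → Matrix (Fin 1) (Fin n) ℝ) (k : ℕ) :
    (Pseq A B G P0 K k).PosSemidef := by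
  induction k with
  | zero => exact hP0
  | succ k ih =>
    rw [Pseq]
    exact (ih.mul_mul_transpose_same _).add (posSemidef_self_mul_conjTranspose (G k))

variable {Q : Matrix (Fin n) (Fin n) ℝ} {R : ℕ → ℝ} {N : ℕ}

lemma trace_Smat_mul_Pseq_succ (hQ : Q.PosSemidef) (hR : ∀ k < N, 0 < R k)
    (K : ℕ → Matrix (Fin 1) (Fin n) ℝ) {k : ℕ} (hk : k < N) :
    (Smat A B Q R N (k + 1) * Pseq A B G P0 K (k + 1)).trace + R k * ctrlVar A B G P0 K k
      = (Smat A B Q R N k * Pseq A B G P0 K k).trace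
        + (Smat A B Q R N (k + 1) * (G k * (G k)ᵀ)).trace
        + cval A B Q R N k * ((K k - Khat A B Q R N k) * Pseq A B G P0 K k
            * (K k - Khat A B Q R N k)ᵀ) 0 0 := by
  have hS := Smat_posSemidef A B hQ hR hk
  have hc := cval_pos A B Q R N hS (hR k hk)
  rw [Pseq, ctrlVar, Smat_of_lt A B Q R N hk]
  exact Matrix.trace_mul_closedLoop_add _ _ _ _ _ _ _ _ _ hS.transpose_eq rfl
    (cval_smul_Khat A B Q R N hc.ne')

lemma JLQ_eq_add_sum (hQ : Q.PosSemidef) (hR : ∀ k < N, 0 < R k)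
    (K : ℕ → Matrix (Fin 1) (Fin n) ℝ) :
    JLQ N A B G P0 Q R K
      = (Smat A B Q R N 0 * P0).trace
          + ∑ k ∈ range N, (Smat A B Q R N (k + 1) * (G k * (G k)ᵀ)).trace
        + ∑ k ∈ range N, cval A B Q R N k * ((K k - Khat A B Q R N k) * Pseq A B G P0 K k
            * (K k - Khat A B Q R N k)ᵀ) 0 0 := by
  set f : ℕ → ℝ := fun k => (Smat A B Q R N k * Pseq A B G P0 K k).trace
  have htel := Finset.sum_range_sub f N
  have hstep : ∀ k ∈ range N, f (k + 1) - f k + R k * ctrlVar A B G P0 K k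
      = (Smat A B Q R N (k + 1) * (G k * (G k)ᵀ)).trace
        + cval A B Q R N k * ((K k - Khat A B Q R N k) * Pseq A B G P0 K k
            * (K k - Khat A B Q R N k)ᵀ) 0 0 := fun k hk => by
    have := trace_Smat_mul_Pseq_succ A B G P0 hQ hR K (mem_range.mp hk)
    simp only [f]
    linarith
  calc JLQ N A B G P0 Q R K
      = f 0 + ∑ k ∈ range N, (f (k + 1) - f k + R k * ctrlVar A B G P0 K k) := by
        rw [JLQ, sum_add_distrib, htel, ← Smat_self A B Q R N]
        simp only [f, Pseq]
        ring
    _ = _ := by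
        rw [sum_congr rfl hstep, sum_add_distrib, add_assoc]
        rfl

end Cost

section Optimality

variable {n m : ℕ} (A : ℕ → Matrix (Fin n) (Fin n) ℝ) (B : ℕ → Matrix (Fin n) (Fin 1) ℝ)
  (G : ℕ → Matrix (Fin n) (Fin m) ℝ) (P0 : Matrix (Fin n) (Fin n) ℝ)
  {Q : Matrix (Fin n) (Fin n) ℝ} {R : ℕ → ℝ} {N : ℕ}

lemma JLQ_Khat (hQ : Q.PosSemidef) (hR : ∀ k < N, 0 < R k) :
    JLQ N A B G P0 Q R (Khat A B Q R N)
      = (Smat A B Q R N 0 * P0).trace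
          + ∑ k ∈ range N, (Smat A B Q R N (k + 1) * (G k * (G k)ᵀ)).trace := by
  simp [JLQ_eq_add_sum A B G P0 hQ hR]

lemma JLQ_Khat_le (hP0 : P0.PosSemidef) (hQ : Q.PosSemidef) (hR : ∀ k < N, 0 < R k)
    (K : ℕ → Matrix (Fin 1) (Fin n) ℝ) :
    JLQ N A B G P0 Q R (Khat A B Q R N) ≤ JLQ N A B G P0 Q R K := by
  rw [JLQ_Khat A B G P0 hQ hR, JLQ_eq_add_sum A B G P0 hQ hR, le_add_iff_nonneg_right]
  refine sum_nonneg fun k hk => mul_nonneg ?_ ?_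
  · exact (cval_pos A B Q R N (Smat_posSemidef A B hQ hR (mem_range.mp hk))
      (hR k (mem_range.mp hk))).le
  · exact ((Pseq_posSemidef A B G P0 hP0 K k).mul_mul_transpose_same _).diag_nonneg

end Optimality

lemma Lagr_eq_JLQ_sub {n m : ℕ} (N Nx : ℕ) (A : ℕ → Matrix (Fin n) (Fin n) ℝ)
    (B : ℕ → Matrix (Fin n) (Fin 1) ℝ) (G : ℕ → Matrix (Fin n) (Fin m) ℝ)
    (P0 : Matrix (Fin n) (Fin n) ℝ) (a : Fin n → ℝ) (𝓡 : ℕ → ℝ)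
    (d : ℕ → Fin n → ℝ) (𝒟 𝒰 : ℕ → ℝ) (K : ℕ → Matrix (Fin 1) (Fin n) ℝ) (ξ η : ℕ → ℝ) :
    Lagr N Nx A B G P0 a 𝓡 d 𝒟 𝒰 K ξ η
      = JLQ N A B G P0 (vecMulVec a a + ∑ i ∈ range Nx, ξ i • vecMulVec (d i) (d i))
          (fun k => 𝓡 k + η k) K
        - (∑ i ∈ range Nx, ξ i * 𝒟 i ^ 2 + ∑ k ∈ range N, η k * 𝒰 k ^ 2) := by
  simp only [Lagr, Jcost, JLQ, trace_add, sum_mul, trace_sum, Matrix.smul_mul,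
    trace_smul, smul_eq_mul, Matrix.trace_vecMulVec_self_mul, mul_sub, add_mul,
    sum_sub_distrib, sum_add_distrib]
  ring

theorem corollary1_solve_via_LQ_weights_general {n m : ℕ} (N Nx : ℕ)
    (A : ℕ → Matrix (Fin n) (Fin n) ℝ) (B : ℕ → Matrix (Fin n) (Fin 1) ℝ)
    (G : ℕ → Matrix (Fin n) (Fin m) ℝ) (P0 : Matrix (Fin n) (Fin n) ℝ) (hP0 : P0.PosSemidef)
    (a : Fin n → ℝ) (𝓡 : ℕ → ℝ)
    (d : ℕ → Fin n → ℝ) (𝒟 𝒰 : ℕ → ℝ)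
    (ξs ηs : ℕ → ℝ) (hξ : ∀ i < Nx, 0 ≤ ξs i)
    (hRpos : ∀ k < N, 0 < 𝓡 k + ηs k)
    (Ks : ℕ → Matrix (Fin 1) (Fin n) ℝ)
    (hmin : ∀ K : ℕ → Matrix (Fin 1) (Fin n) ℝ,
        Lagr N Nx A B G P0 a 𝓡 d 𝒟 𝒰 Ks ξs ηs ≤ Lagr N Nx A B G P0 a 𝓡 d 𝒟 𝒰 K ξs ηs) :
    JLQ N A B G P0 (vecMulVec a a + ∑ i ∈ range Nx, ξs i • vecMulVec (d i) (d i))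
        (fun k => 𝓡 k + ηs k) Ks =
      JLQ N A B G P0 (vecMulVec a a + ∑ i ∈ range Nx, ξs i • vecMulVec (d i) (d i))
        (fun k => 𝓡 k + ηs k)
        (Khat A B (vecMulVec a a + ∑ i ∈ range Nx, ξs i • vecMulVec (d i) (d i))
          (fun k => 𝓡 k + ηs k) N) ∧
    JLQ N A B G P0 (vecMulVec a a + ∑ i ∈ range Nx, ξs i • vecMulVec (d i) (d i))
        (fun k => 𝓡 k + ηs k) Ks =
      (Smat A B (vecMulVec a a + ∑ i ∈ range Nx, ξs i • vecMulVec (d i) (d i))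
            (fun k => 𝓡 k + ηs k) N 0 * P0).trace
        + ∑ k ∈ range N,
            (Smat A B (vecMulVec a a + ∑ i ∈ range Nx, ξs i • vecMulVec (d i) (d i))
                (fun k => 𝓡 k + ηs k) N (k + 1) * (G k * (G k)ᵀ)).trace := by
  set Q := vecMulVec a a + ∑ i ∈ range Nx, ξs i • vecMulVec (d i) (d i)
  set R : ℕ → ℝ := fun k => 𝓡 k + ηs k
  have hQ : Q.PosSemidef :=
    (posSemidef_vecMulVec_self a).add <| posSemidef_sum _ fun i hi =>
      (posSemidef_vecMulVec_self (d i)).smul (hξ i (mem_range.mp hi))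
  have hKs_le : JLQ N A B G P0 Q R Ks ≤ JLQ N A B G P0 Q R (Khat A B Q R N) := by
    have := hmin (Khat A B Q R N)
    rwa [Lagr_eq_JLQ_sub, Lagr_eq_JLQ_sub, sub_le_sub_iff_right] at this
  have hKs_eq := hKs_le.antisymm (JLQ_Khat_le A B G P0 hP0 hQ hRpos Ks)
  exact ⟨hKs_eq, hKs_eq.trans (JLQ_Khat A B G P0 hQ hRpos)⟩

/-- **Corollary 1.** If `ξ*, η* ≥ 0`, `K*` is feasible, satisfies complementary slackness with
`(ξ*, η*)`, minimizes the Lagrangian `K ↦ L(K, ξ*)` over all gain sequences, and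
`R*_k = 𝓡_k + η*_k > 0` for all `k`, then with `Q* = a aᵀ + Σ_i ξ*_i d_i d_iᵀ`, the
constrained-optimal gain `K*` attains the same LQ cost as the Riccati gains `K̂` for the weights
`(Q*, R*)`: `J_LQ(K*; Q*, R*) = J_LQ(K̂; Q*, R*) = tr(S_0 P_0) + Σ_{k<N} tr(S_{k+1} G_k G_kᵀ)`. -/
theorem corollary1_solve_via_LQ_weights {n m : ℕ} (N Nx : ℕ) (hN : 1 ≤ N)
    (A : ℕ → Matrix (Fin n) (Fin n) ℝ) (B : ℕ → Matrix (Fin n) (Fin 1) ℝ)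
    (G : ℕ → Matrix (Fin n) (Fin m) ℝ) (P0 : Matrix (Fin n) (Fin n) ℝ) (hP0 : P0.PosSemidef)
    (a : Fin n → ℝ) (𝓡 : ℕ → ℝ) (h𝓡 : ∀ k < N, 0 ≤ 𝓡 k)
    (d : ℕ → Fin n → ℝ) (𝒟 𝒰 : ℕ → ℝ) (h𝒟 : ∀ i < Nx, 0 < 𝒟 i) (h𝒰 : ∀ k < N, 0 < 𝒰 k)
    (ξs ηs : ℕ → ℝ) (hξ : ∀ i < Nx, 0 ≤ ξs i) (hη : ∀ k < N, 0 ≤ ηs k)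
    (hRpos : ∀ k < N, 0 < 𝓡 k + ηs k)
    (Ks : ℕ → Matrix (Fin 1) (Fin n) ℝ)
    (hfeas : Feasible N Nx A B G P0 d 𝒟 𝒰 Ks)
    (hslackx : ∀ i < Nx, ξs i * (d i ⬝ᵥ (Pseq A B G P0 Ks N).mulVec (d i) - 𝒟 i ^ 2) = 0)
    (hslacku : ∀ k < N, ηs k * (ctrlVar A B G P0 Ks k - 𝒰 k ^ 2) = 0)
    (hmin : ∀ K : ℕ → Matrix (Fin 1) (Fin n) ℝ,
        Lagr N Nx A B G P0 a 𝓡 d 𝒟 𝒰 Ks ξs ηs ≤ Lagr N Nx A B G P0 a 𝓡 d 𝒟 𝒰 K ξs ηs) :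
    JLQ N A B G P0 (vecMulVec a a + ∑ i ∈ range Nx, ξs i • vecMulVec (d i) (d i))
        (fun k => 𝓡 k + ηs k) Ks =
      JLQ N A B G P0 (vecMulVec a a + ∑ i ∈ range Nx, ξs i • vecMulVec (d i) (d i))
        (fun k => 𝓡 k + ηs k)
        (Khat A B (vecMulVec a a + ∑ i ∈ range Nx, ξs i • vecMulVec (d i) (d i))
          (fun k => 𝓡 k + ηs k) N) ∧
    JLQ N A B G P0 (vecMulVec a a + ∑ i ∈ range Nx, ξs i • vecMulVec (d i) (d i))
        (fun k => 𝓡 k + ηs k) Ks =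
      (Smat A B (vecMulVec a a + ∑ i ∈ range Nx, ξs i • vecMulVec (d i) (d i))
            (fun k => 𝓡 k + ηs k) N 0 * P0).trace
        + ∑ k ∈ range N,
            (Smat A B (vecMulVec a a + ∑ i ∈ range Nx, ξs i • vecMulVec (d i) (d i))
                (fun k => 𝓡 k + ηs k) N (k + 1) * (G k * (G k)ᵀ)).trace :=
  corollary1_solve_via_LQ_weights_general N Nx A B G P0 hP0 a 𝓡 d 𝒟 𝒰 ξs ηs hξ hRpos Ks hmin
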